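/- Let G be a finite directed graph with parametric edge weights w_λ(e) = b(e) − m(e)·λ, where b(e) ∈ ℝ and m(e) ∈ {0,1}, and suppose at least one cycle C₀ has Σ_{e∈C₀} m(e) > 0. Let λ* = min over cycles C with Σ_{e∈C} m(e) > 0 of (Σ_{e∈C} b(e)) / (Σ_{e∈C} m(e)). If every cycle C with Σ_{e∈C} m(e) = 0 satisfies Σ_{e∈C} b(e) ≥ 0, then the set {λ ∈ ℝ : G has no negative cycle at λ} equals (−∞, λ*]. -/
import Mathlib


/-- `c 0, …, c n` is a closed walk (cycle) in the directed graph `E`. -/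
def IsCycle {V : Type*} (E : V → V → Prop) (n : ℕ) (c : ℕ → V) : Prop :=
  0 < n ∧ c n = c 0 ∧ ∀ i < n, E (c i) (c (i + 1))

/-- Sum of a per-edge quantity `f` along the closed walk `c 0, …, c n`. -/
def cycleSum {V : Type*} (f : V → V → ℝ) (n : ℕ) (c : ℕ → V) : ℝ :=
  ∑ i ∈ Finset.range n, f (c i) (c (i + 1))

lemma cycleSum_param {V : Type*} (b m : V → V → ℝ) (lam : ℝ) (n : ℕ) (c : ℕ → V) :
    cycleSum (fun u v => b u v - m u v * lam) n c
      = cycleSum b n c - cycleSum m n c * lam := by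
  simp [cycleSum, Finset.sum_sub_distrib, Finset.sum_mul]

/-- with parametric weights `b(e) − m(e)·λ`, `m(e) ∈ {0,1}`,
if some cycle has `M(C) > 0`, every cycle with `M(C) = 0` has `B(C) ≥ 0`, and
`λ*` is the minimum over cycles with `M(C) > 0` of `B(C)/M(C)`, then the set of
`λ` admitting no negative cycle is exactly `(−∞, λ*]`. -/
theorem no_negative_cycle_set_eq_Iic {V : Type*} [Fintype V]
    (E : V → V → Prop) (b m : V → V → ℝ)
    (hm : ∀ u v, E u v → m u v = 0 ∨ m u v = 1)
    (hexists : ∃ n c, IsCycle E n c ∧ 0 < cycleSum m n c)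
    (hzero : ∀ n c, IsCycle E n c → cycleSum m n c = 0 → 0 ≤ cycleSum b n c)
    (lamStar : ℝ)
    (hmin : IsLeast {r : ℝ | ∃ n c, IsCycle E n c ∧ 0 < cycleSum m n c ∧
      r = cycleSum b n c / cycleSum m n c} lamStar) :
    {lam : ℝ | ∀ n c, IsCycle E n c →
      0 ≤ cycleSum (fun u v => b u v - m u v * lam) n c} = Set.Iic lamStar := by
  ext lam
  simp only [Set.mem_setOf_eq, Set.mem_Iic]
  constructor
  · intro h
    obtain ⟨⟨n, c, hc, hMpos, hr⟩, _⟩ := hmin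
    have := h n c hc
    rw [cycleSum_param] at this
    rw [hr, le_div_iff₀ hMpos]
    nlinarith
  · intro hlam n c hc
    rw [cycleSum_param]
    have hM0 : 0 ≤ cycleSum m n c := by
      apply Finset.sum_nonneg
      intro i hi
      rcases hm _ _ (hc.2.2 i (Finset.mem_range.mp hi)) with h | h <;> simp [h]
    rcases eq_or_lt_of_le hM0 with hM | hM
    · have hB := hzero n c hc hM.symm
      rw [← hM, zero_mul, sub_zero]
      exact hB
    · have hmem : cycleSum b n c / cycleSum m n c ∈ {r : ℝ | ∃ n c, IsCycle E n c ∧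
          0 < cycleSum m n c ∧ r = cycleSum b n c / cycleSum m n c} := ⟨n, c, hc, hM, rfl⟩
      have hle := hmin.2 hmem
      have : lam ≤ cycleSum b n c / cycleSum m n c := hlam.trans hle
      rw [le_div_iff₀ hM] at this
      nlinarith
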